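/- arXiv:2007.15845 — 4 statements merged into one kernel-verified Lean document; each statement's English description precedes it below -/
import Mathlib

section
/- Let X ⊆ ℝ^n be nonempty, closed, and convex; let f : ℝ^n → ℝ be continuously differentiable and μ_f-strongly convex on X; let F : ℝ^n → ℝ^n be continuous and monotone on X; and suppose SOL(X,F) is nonempty. Let (η_k) be a nonincreasing sequence of strictly positive scalars with lim_{k→∞} η_k = 0, let x*_{η_k} denote the unique solution of the regularized variational inequality VI(X, F + η_k ∇f), and let x* denote the unique minimizer of f over SOL(X,F). Then lim_{k→∞} x*_{η_k} = x*. -/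
/-!
Testing the regularized inequality for `x*_η` at `x*` and the original one for `x*` at `x*_η`,
monotonicity of `F` gives `⟪∇f x*_η, x* - x*_η⟫ ≥ 0`; by strong convexity this yields
`f x*_η + μ/2 ‖x* - x*_η‖² ≤ f x*`, which also keeps the trajectory in a ball around `x*`.
Every cluster point `a` solves `VI(X,F)` (pass to the limit with `η_k → 0`) and inherits
`f a + μ/2 ‖x* - a‖² ≤ f x* ≤ f a`, so `a = x*`.
-/

open scoped RealInnerProductSpace
open Filter

/-- The solution set `SOL(X,G)` of the variational inequality `VI(X,G)`. -/
def VISol {n : ℕ} (X : Set (EuclideanSpace ℝ (Fin n)))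
    (G : EuclideanSpace ℝ (Fin n) → EuclideanSpace ℝ (Fin n)) : Set (EuclideanSpace ℝ (Fin n)) :=
  {x | x ∈ X ∧ ∀ y ∈ X, 0 ≤ ⟪G x, y - x⟫}

open Topology

section VariationalInequality

variable {E : Type*} [NormedAddCommGroup E] [InnerProductSpace ℝ E]

lemma inner_nonneg_of_regularized_vi_sol {X : Set E} {F g : E → E} {η : ℝ} (hη : 0 < η)
    {x xs : E} (hx : x ∈ X) (hxs : xs ∈ X) (hmono : 0 ≤ ⟪F x - F xs, x - xs⟫)
    (hxVI : ∀ y ∈ X, 0 ≤ ⟪F x + η • g x, y - x⟫) (hxsVI : ∀ y ∈ X, 0 ≤ ⟪F xs, y - xs⟫) :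
    0 ≤ ⟪g x, xs - x⟫ := by
  have hreg := hxVI xs hxs
  rw [inner_add_left, real_inner_smul_left] at hreg
  have hF : ⟪F x, xs - x⟫ ≤ 0 := by
    rw [← neg_sub x xs, inner_neg_right]
    rw [inner_sub_left] at hmono
    linarith [hxsVI x hx]
  exact (mul_nonneg_iff_of_pos_left hη).1 (by linarith)

lemma norm_sub_le_div_of_strongly_convex {f : E → ℝ} {μ : ℝ} (hμ : 0 < μ) {x xs v : E}
    (hdescent : f x + μ / 2 * ‖xs - x‖ ^ 2 ≤ f xs)
    (hstrong : f xs + ⟪v, x - xs⟫ + μ / 2 * ‖x - xs‖ ^ 2 ≤ f x) :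
    ‖x - xs‖ ≤ ‖v‖ / μ := by
  rw [norm_sub_rev xs x] at hdescent
  have hcs : -⟪v, x - xs⟫ ≤ ‖v‖ * ‖x - xs‖ := (neg_le_abs _).trans (abs_real_inner_le_norm _ _)
  have hsq : μ * ‖x - xs‖ ^ 2 ≤ ‖v‖ * ‖x - xs‖ := by linarith
  rw [le_div_iff₀ hμ]
  rcases (norm_nonneg (x - xs)).eq_or_lt with h0 | hpos
  · rw [← h0, zero_mul]
    exact norm_nonneg v
  · nlinarith

lemma mem_vi_sol_of_tendsto {ι : Type*} {l : Filter ι} [l.NeBot] {X : Set E} (hX : IsClosed X)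
    {F g : E → E} {a : E} (hF : ContinuousAt F a) (hg : ContinuousAt g a) {x : ι → E}
    {η : ι → ℝ} (hx : Tendsto x l (𝓝 a)) (hη : Tendsto η l (𝓝 0)) (hxX : ∀ i, x i ∈ X)
    (hxVI : ∀ i, ∀ y ∈ X, 0 ≤ ⟪F (x i) + η i • g (x i), y - x i⟫) :
    a ∈ X ∧ ∀ y ∈ X, 0 ≤ ⟪F a, y - a⟫ := by
  refine ⟨hX.mem_of_tendsto hx (Eventually.of_forall hxX), fun y hy => ?_⟩
  have hlim : Tendsto (fun i => ⟪F (x i) + η i • g (x i), y - x i⟫) l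
      (𝓝 ⟪F a + (0 : ℝ) • g a, y - a⟫) :=
    ((hF.tendsto.comp hx).add (hη.smul (hg.tendsto.comp hx))).inner (tendsto_const_nhds.sub hx)
  simpa using ge_of_tendsto' hlim fun i => hxVI i y hy

end VariationalInequality

theorem tikhonov_trajectory_converges_general {n : ℕ} (X : Set (EuclideanSpace ℝ (Fin n)))
    (hXcl : IsClosed X)
    (f : EuclideanSpace ℝ (Fin n) → ℝ) (hf : ContDiff ℝ 1 f)
    (μf : ℝ) (hμf : 0 < μf)
    (hstrong : ∀ x ∈ X, ∀ y ∈ X,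
      f y + ⟪gradient f y, x - y⟫ + μf / 2 * ‖x - y‖ ^ 2 ≤ f x)
    (F : EuclideanSpace ℝ (Fin n) → EuclideanSpace ℝ (Fin n)) (hFc : Continuous F)
    (hmono : ∀ x ∈ X, ∀ y ∈ X, 0 ≤ ⟪F x - F y, x - y⟫)
    (η : ℕ → ℝ) (hηpos : ∀ k, 0 < η k)
    (hηlim : Tendsto η atTop (nhds 0))
    (xeta : ℕ → EuclideanSpace ℝ (Fin n))
    (hxeta : ∀ k, xeta k ∈ VISol X (fun z => F z + η k • gradient f z))
    (xstar : EuclideanSpace ℝ (Fin n))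
    (hxstar : xstar ∈ VISol X F ∧ ∀ y ∈ VISol X F, f xstar ≤ f y) :
    Tendsto xeta atTop (nhds xstar) := by
  obtain ⟨⟨hxsX, hxsVI⟩, hxsmin⟩ := hxstar
  have hgrad : Continuous (gradient f) :=
    (InnerProductSpace.toDual ℝ _).symm.continuous.comp (hf.continuous_fderiv one_ne_zero)
  have hdescent : ∀ k, f (xeta k) + μf / 2 * ‖xstar - xeta k‖ ^ 2 ≤ f xstar := fun k => by
    have := inner_nonneg_of_regularized_vi_sol (hηpos k) (hxeta k).1 hxsX
      (hmono _ (hxeta k).1 _ hxsX) (hxeta k).2 hxsVI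
    linarith [hstrong xstar hxsX _ (hxeta k).1]
  have hball : ∀ k, xeta k ∈ Metric.closedBall xstar (‖gradient f xstar‖ / μf) := fun k =>
    mem_closedBall_iff_norm.2 <|
      norm_sub_le_div_of_strongly_convex hμf (hdescent k) (hstrong _ (hxeta k).1 xstar hxsX)
  refine (isCompact_closedBall _ _).tendsto_nhds_of_unique_mapClusterPt
    (Eventually.of_forall hball) fun a _ hclus => ?_
  obtain ⟨ψ, hψ, hlim⟩ := hclus.tendsto_subseq
  have haSol : a ∈ VISol X F := mem_vi_sol_of_tendsto hXcl hFc.continuousAt hgrad.continuousAt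
    hlim (hηlim.comp hψ.tendsto_atTop) (fun k => (hxeta (ψ k)).1) fun k => (hxeta (ψ k)).2
  have hadescent : f a + μf / 2 * ‖xstar - a‖ ^ 2 ≤ f xstar :=
    (isClosed_le (f := fun z => f z + μf / 2 * ‖xstar - z‖ ^ 2) (g := fun _ => f xstar)
      (hf.continuous.add (by fun_prop)) continuous_const).mem_of_tendsto hlim
      (Eventually.of_forall fun k => hdescent (ψ k))
  have hsq : ‖xstar - a‖ ^ 2 ≤ 0 := by nlinarith [hxsmin a haSol]
  have hnorm : ‖xstar - a‖ = 0 := pow_eq_zero_iff two_ne_zero |>.1 (hsq.antisymm (by positivity))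
  exact (norm_sub_eq_zero_iff.1 hnorm).symm

/-- Under closedness/convexity of `X`, strong convexity and smoothness of `f`,
continuity and monotonicity of `F`, and nonemptiness of `SOL(X,F)`, the Tikhonov trajectory
`x*_{η_k}` (the solutions of the regularized problems `VI(X, F + η_k ∇f)`, with `η_k ↓ 0`)
converges to the unique minimizer `x*` of `f` over `SOL(X,F)`. -/
theorem tikhonov_trajectory_converges {n : ℕ} (X : Set (EuclideanSpace ℝ (Fin n)))
    (hXne : X.Nonempty) (hXcl : IsClosed X) (hXcv : Convex ℝ X)
    (f : EuclideanSpace ℝ (Fin n) → ℝ) (hf : ContDiff ℝ 1 f)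
    (μf : ℝ) (hμf : 0 < μf)
    (hstrong : ∀ x ∈ X, ∀ y ∈ X,
      f y + ⟪gradient f y, x - y⟫ + μf / 2 * ‖x - y‖ ^ 2 ≤ f x)
    (F : EuclideanSpace ℝ (Fin n) → EuclideanSpace ℝ (Fin n)) (hFc : Continuous F)
    (hmono : ∀ x ∈ X, ∀ y ∈ X, 0 ≤ ⟪F x - F y, x - y⟫)
    (hSOL : (VISol X F).Nonempty)
    (η : ℕ → ℝ) (hηpos : ∀ k, 0 < η k) (hηmono : ∀ k, η (k + 1) ≤ η k)
    (hηlim : Tendsto η atTop (nhds 0))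
    (xeta : ℕ → EuclideanSpace ℝ (Fin n))
    (hxeta : ∀ k, xeta k ∈ VISol X (fun z => F z + η k • gradient f z))
    (xstar : EuclideanSpace ℝ (Fin n))
    (hxstar : xstar ∈ VISol X F ∧ ∀ y ∈ VISol X F, f xstar ≤ f y) :
    Tendsto xeta atTop (nhds xstar) :=
  tikhonov_trajectory_converges_general X hXcl f hf μf hμf hstrong F hFc hmono η hηpos hηlim xeta
    hxeta xstar hxstar
end

section
/- Let X ⊆ ℝ^n be nonempty, closed, and convex; let f : ℝ^n → ℝ be continuously differentiable and μ_f-strongly convex on X; and let F : ℝ^n → ℝ^n be continuous and monotone on X. Let η > 0 and let x*_η ∈ X be a solution of the regularized variational inequality VI(X, F + η∇f). Then for every x̂ ∈ SOL(X,F): ⟨∇f(x*_η), x̂ − x*_η⟩ ≥ 0, and consequently f(x̂) ≥ f(x*_η) + (μ_f/2)‖x̂ − x*_η‖². -/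
/-!
Testing the regularized inequality at `x̂` gives `⟨F x*_η, x̂ - x*_η⟩ + η ⟨∇f x*_η, x̂ - x*_η⟩ ≥ 0`,
while monotonicity of `F` together with `x̂ ∈ SOL(X,F)` gives `⟨F x*_η, x̂ - x*_η⟩ ≤ 0`
(Minty's inequality). Hence `⟨∇f x*_η, x̂ - x*_η⟩ ≥ 0`, and strong convexity of `f` at `x*_η`
turns this into the quadratic growth bound.
-/

open scoped RealInnerProductSpace

section

variable {E : Type*} [NormedAddCommGroup E] [InnerProductSpace ℝ E]

theorem inner_apply_sub_nonneg_of_monotone {X : Set E} {F : E → E}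
    (hmono : ∀ x ∈ X, ∀ y ∈ X, 0 ≤ ⟪F x - F y, x - y⟫)
    {xhat : E} (hxhat : xhat ∈ X) (hsol : ∀ y ∈ X, 0 ≤ ⟪F xhat, y - xhat⟫)
    {y : E} (hy : y ∈ X) :
    0 ≤ ⟪F y, y - xhat⟫ := by
  have hmono_y := hmono y hy xhat hxhat
  have hsol_y := hsol y hy
  rw [inner_sub_left] at hmono_y
  linarith

theorem inner_regularizer_nonneg_of_regularized_solution {X : Set E} {F G : E → E}
    (hmono : ∀ x ∈ X, ∀ y ∈ X, 0 ≤ ⟪F x - F y, x - y⟫) {η : ℝ} (hη : 0 < η)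
    {xeta : E} (hxeta : xeta ∈ X) (hreg : ∀ y ∈ X, 0 ≤ ⟪F xeta + η • G xeta, y - xeta⟫)
    {xhat : E} (hxhat : xhat ∈ X) (hsol : ∀ y ∈ X, 0 ≤ ⟪F xhat, y - xhat⟫) :
    0 ≤ ⟪G xeta, xhat - xeta⟫ := by
  have hminty : ⟪F xeta, xhat - xeta⟫ ≤ 0 := by
    have := inner_apply_sub_nonneg_of_monotone hmono hxhat hsol hxeta
    rwa [← neg_sub, inner_neg_right, neg_nonneg] at this
  have hreg_xhat := hreg xhat hxhat
  rw [inner_add_left, real_inner_smul_left] at hreg_xhat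
  have : 0 ≤ η * ⟪G xeta, xhat - xeta⟫ := by linarith
  exact nonneg_of_mul_nonneg_right this hη

end

theorem regularized_solution_gradient_inequality_general {n : ℕ} (X : Set (EuclideanSpace ℝ (Fin n)))
    (f : EuclideanSpace ℝ (Fin n) → ℝ)
    (μf : ℝ)
    (hstrong : ∀ x ∈ X, ∀ y ∈ X,
      f y + ⟪gradient f y, x - y⟫ + μf / 2 * ‖x - y‖ ^ 2 ≤ f x)
    (F : EuclideanSpace ℝ (Fin n) → EuclideanSpace ℝ (Fin n))
    (hmono : ∀ x ∈ X, ∀ y ∈ X, 0 ≤ ⟪F x - F y, x - y⟫)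
    (η : ℝ) (hη : 0 < η)
    (xeta : EuclideanSpace ℝ (Fin n))
    (hxeta : xeta ∈ VISol X (fun z => F z + η • gradient f z))
    (xhat : EuclideanSpace ℝ (Fin n)) (hxhat : xhat ∈ VISol X F) :
    0 ≤ ⟪gradient f xeta, xhat - xeta⟫ ∧
      f xeta + μf / 2 * ‖xhat - xeta‖ ^ 2 ≤ f xhat := by
  obtain ⟨hxeta_mem, hreg⟩ := hxeta
  obtain ⟨hxhat_mem, hsol⟩ := hxhat
  have hgrad := inner_regularizer_nonneg_of_regularized_solution hmono hη hxeta_mem hreg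
    hxhat_mem hsol
  refine ⟨hgrad, ?_⟩
  linarith [hstrong xhat hxhat_mem xeta hxeta_mem]

/-- If `x*_η` solves the regularized problem `VI(X, F + η∇f)` with `η > 0`,
then for every `x̂ ∈ SOL(X,F)`: `⟨∇f(x*_η), x̂ − x*_η⟩ ≥ 0`, and consequently
`f(x̂) ≥ f(x*_η) + (μ_f/2)‖x̂ − x*_η‖²`. -/
theorem regularized_solution_gradient_inequality {n : ℕ} (X : Set (EuclideanSpace ℝ (Fin n)))
    (hXne : X.Nonempty) (hXcl : IsClosed X) (hXcv : Convex ℝ X)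
    (f : EuclideanSpace ℝ (Fin n) → ℝ) (hf : ContDiff ℝ 1 f)
    (μf : ℝ) (hμf : 0 < μf)
    (hstrong : ∀ x ∈ X, ∀ y ∈ X,
      f y + ⟪gradient f y, x - y⟫ + μf / 2 * ‖x - y‖ ^ 2 ≤ f x)
    (F : EuclideanSpace ℝ (Fin n) → EuclideanSpace ℝ (Fin n)) (hFc : Continuous F)
    (hmono : ∀ x ∈ X, ∀ y ∈ X, 0 ≤ ⟪F x - F y, x - y⟫)
    (η : ℝ) (hη : 0 < η)
    (xeta : EuclideanSpace ℝ (Fin n))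
    (hxeta : xeta ∈ VISol X (fun z => F z + η • gradient f z))
    (xhat : EuclideanSpace ℝ (Fin n)) (hxhat : xhat ∈ VISol X F) :
    0 ≤ ⟪gradient f xeta, xhat - xeta⟫ ∧
      f xeta + μf / 2 * ‖xhat - xeta‖ ^ 2 ≤ f xhat :=
  regularized_solution_gradient_inequality_general X f μf hstrong F hmono η hη xeta hxeta xhat hxhat
end

section
/- Let X ⊆ ℝ^n be nonempty, closed, and convex; let f : ℝ^n → ℝ be continuously differentiable and μ_f-strongly convex on X; and let F : ℝ^n → ℝ^n be continuous and monotone on X. Let η, η' > 0 and let x*_η and x*_{η'} be solutions of the regularized variational inequalities VI(X, F + η∇f) and VI(X, F + η'∇f), respectively. Then μ_f ‖x*_η − x*_{η'}‖ ≤ |1 − η'/η| · ‖∇f(x*_{η'})‖. -/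
open scoped RealInnerProductSpace

section

variable {E : Type*} [NormedAddCommGroup E] [InnerProductSpace ℝ E]

theorem mul_norm_sub_sq_le_inner_sub_of_strongConvex {X : Set E} {f : E → ℝ} {g : E → E}
    {μ : ℝ} (hstrong : ∀ x ∈ X, ∀ y ∈ X, f y + ⟪g y, x - y⟫ + μ / 2 * ‖x - y‖ ^ 2 ≤ f x)
    {x y : E} (hx : x ∈ X) (hy : y ∈ X) :
    μ * ‖x - y‖ ^ 2 ≤ ⟪g x - g y, x - y⟫ := by
  have hxy := hstrong x hx y hy
  have hyx := hstrong y hy x hx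
  rw [norm_sub_rev, ← neg_sub x y, inner_neg_right] at hyx
  rw [inner_sub_left]
  linarith

theorem inner_sub_le_of_mem_regularized_sol {X : Set E} {F g : E → E}
    (hmono : ∀ x ∈ X, ∀ y ∈ X, 0 ≤ ⟪F x - F y, x - y⟫) {η η' : ℝ} {x x' : E}
    (hx : x ∈ X) (hxsol : ∀ y ∈ X, 0 ≤ ⟪F x + η • g x, y - x⟫)
    (hx' : x' ∈ X) (hx'sol : ∀ y ∈ X, 0 ≤ ⟪F x' + η' • g x', y - x'⟫) :
    η * ⟪g x - g x', x - x'⟫ ≤ (η' - η) * ⟪g x', x - x'⟫ := by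
  have h := hxsol x' hx'
  have h' := hx'sol x hx
  have hF := hmono x hx x' hx'
  rw [← neg_sub x x', inner_neg_right] at h
  simp only [inner_add_left, inner_sub_left, real_inner_smul_left] at h h' hF ⊢
  linarith

theorem mul_norm_le_norm_of_mul_norm_sq_le_inner {μ : ℝ} {v d : E}
    (h : μ * ‖d‖ ^ 2 ≤ ⟪v, d⟫) : μ * ‖d‖ ≤ ‖v‖ := by
  rcases (norm_nonneg d).eq_or_lt with hd | hd
  · rw [← hd, mul_zero]
    exact norm_nonneg v
  · refine le_of_mul_le_mul_right ?_ hd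
    calc μ * ‖d‖ * ‖d‖ = μ * ‖d‖ ^ 2 := by ring
      _ ≤ ⟪v, d⟫ := h
      _ ≤ ‖v‖ * ‖d‖ := real_inner_le_norm v d

end

theorem tikhonov_trajectory_increment_bound_general {n : ℕ} (X : Set (EuclideanSpace ℝ (Fin n)))
    (f : EuclideanSpace ℝ (Fin n) → ℝ)
    (μf : ℝ)
    (hstrong : ∀ x ∈ X, ∀ y ∈ X,
      f y + ⟪gradient f y, x - y⟫ + μf / 2 * ‖x - y‖ ^ 2 ≤ f x)
    (F : EuclideanSpace ℝ (Fin n) → EuclideanSpace ℝ (Fin n))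
    (hmono : ∀ x ∈ X, ∀ y ∈ X, 0 ≤ ⟪F x - F y, x - y⟫)
    (η η' : ℝ) (hη : 0 < η)
    (xeta xeta' : EuclideanSpace ℝ (Fin n))
    (hxeta : xeta ∈ VISol X (fun z => F z + η • gradient f z))
    (hxeta' : xeta' ∈ VISol X (fun z => F z + η' • gradient f z)) :
    μf * ‖xeta - xeta'‖ ≤ |1 - η' / η| * ‖gradient f xeta'‖ := by
  obtain ⟨hx, hxsol⟩ := hxeta
  obtain ⟨hx', hx'sol⟩ := hxeta'
  have hgrad := mul_norm_sub_sq_le_inner_sub_of_strongConvex hstrong hx hx'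
  have hsol := inner_sub_le_of_mem_regularized_sol hmono hx hxsol hx' hx'sol
  have hkey : μf * ‖xeta - xeta'‖ ^ 2
      ≤ ⟪(η' / η - 1) • gradient f xeta', xeta - xeta'⟫ := by
    rw [real_inner_smul_left, show η' / η - 1 = (η' - η) / η by field_simp,
      div_mul_eq_mul_div, le_div_iff₀ hη]
    linarith [mul_le_mul_of_nonneg_left hgrad hη.le]
  calc μf * ‖xeta - xeta'‖ ≤ ‖(η' / η - 1) • gradient f xeta'‖ :=
        mul_norm_le_norm_of_mul_norm_sq_le_inner hkey
    _ = |1 - η' / η| * ‖gradient f xeta'‖ := by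
        rw [norm_smul, Real.norm_eq_abs, abs_sub_comm]

/-- If `x*_η` and `x*_{η'}` solve `VI(X, F + η∇f)` and `VI(X, F + η'∇f)`
with `η, η' > 0`, then `μ_f ‖x*_η − x*_{η'}‖ ≤ |1 − η'/η| · ‖∇f(x*_{η'})‖`. -/
theorem tikhonov_trajectory_increment_bound {n : ℕ} (X : Set (EuclideanSpace ℝ (Fin n)))
    (hXne : X.Nonempty) (hXcl : IsClosed X) (hXcv : Convex ℝ X)
    (f : EuclideanSpace ℝ (Fin n) → ℝ) (hf : ContDiff ℝ 1 f)
    (μf : ℝ) (hμf : 0 < μf)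
    (hstrong : ∀ x ∈ X, ∀ y ∈ X,
      f y + ⟪gradient f y, x - y⟫ + μf / 2 * ‖x - y‖ ^ 2 ≤ f x)
    (F : EuclideanSpace ℝ (Fin n) → EuclideanSpace ℝ (Fin n)) (hFc : Continuous F)
    (hmono : ∀ x ∈ X, ∀ y ∈ X, 0 ≤ ⟪F x - F y, x - y⟫)
    (η η' : ℝ) (hη : 0 < η) (hη' : 0 < η')
    (xeta xeta' : EuclideanSpace ℝ (Fin n))
    (hxeta : xeta ∈ VISol X (fun z => F z + η • gradient f z))
    (hxeta' : xeta' ∈ VISol X (fun z => F z + η' • gradient f z)) :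
    μf * ‖xeta - xeta'‖ ≤ |1 - η' / η| * ‖gradient f xeta'‖ :=
  tikhonov_trajectory_increment_bound_general X f μf hstrong F hmono η η' hη xeta xeta' hxeta hxeta'
end

section
/- Let X ⊆ ℝ^n be nonempty, closed, and convex; let f : ℝ^n → ℝ be continuously differentiable and μ_f-strongly convex on X; let F : ℝ^n → ℝ^n be continuous and monotone on X; and suppose SOL(X,F) is nonempty. Let (η_k) be a nonincreasing sequence of strictly positive scalars with lim_{k→∞} η_k = 0 and let x*_{η_k} denote the unique solution of VI(X, F + η_k ∇f). Then there exists a constant C̄_f > 0 such that for all k ≥ 1: ‖x*_{η_k} − x*_{η_{k−1}}‖ ≤ (C̄_f/μ_f) · |1 − η_{k−1}/η_k|. -/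
open scoped RealInnerProductSpace
open Filter

/-!
Write `g = ∇f`. Adding the variational inequalities of `VI(X, F + a g)` at `x` and of
`VI(X, F + b g)` at `y`, tested against each other, and using monotonicity of `F` and
`μ_f`-strong monotonicity of `g` gives `a μ_f ‖x - y‖ ≤ |b - a| ‖g y‖`.
With `b = 0` and `y` a solution of `VI(X, F)` this confines the whole trajectory to a ball,
on which the continuous `g` is bounded by some `M`; with `a = η_k`, `b = η_{k-1}` it gives
the theorem with `C̄_f = max M 1`.
-/

theorem ContDiff.continuous_gradient {E : Type*} [NormedAddCommGroup E] [InnerProductSpace ℝ E]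
    [CompleteSpace E] {f : E → ℝ} (hf : ContDiff ℝ 1 f) : Continuous (gradient f) :=
  (InnerProductSpace.toDual ℝ E).symm.continuous.comp (hf.continuous_fderiv one_ne_zero)

section VariationalInequality

variable {E : Type*} [NormedAddCommGroup E] [InnerProductSpace ℝ E]
  {X : Set E} {F g : E → E} {μ a b : ℝ} {x y : E}

theorem strongMonotone_of_strongConvex {f : E → ℝ}
    (hstrong : ∀ x ∈ X, ∀ y ∈ X, f y + ⟪g y, x - y⟫ + μ / 2 * ‖x - y‖ ^ 2 ≤ f x) :
    ∀ x ∈ X, ∀ y ∈ X, μ * ‖x - y‖ ^ 2 ≤ ⟪g x - g y, x - y⟫ := by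
  intro x hx y hy
  have hxy := hstrong x hx y hy
  have hyx := hstrong y hy x hx
  rw [norm_sub_rev, ← neg_sub x y, inner_neg_right] at hyx
  rw [inner_sub_left]
  linarith

theorem inner_le_of_variationalInequality_add_smul
    (hmono : ∀ x ∈ X, ∀ y ∈ X, 0 ≤ ⟪F x - F y, x - y⟫) (hx : x ∈ X) (hy : y ∈ X)
    (hxsol : ∀ z ∈ X, 0 ≤ ⟪F x + a • g x, z - x⟫)
    (hysol : ∀ z ∈ X, 0 ≤ ⟪F y + b • g y, z - y⟫) :
    a * ⟪g x - g y, x - y⟫ ≤ (b - a) * ⟪g y, x - y⟫ := by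
  have hxy := hxsol y hy
  have hyx := hysol x hx
  have hF := hmono x hx y hy
  rw [← neg_sub x y, inner_neg_right, inner_add_left, real_inner_smul_left] at hxy
  rw [inner_add_left, real_inner_smul_left] at hyx
  rw [inner_sub_left] at hF ⊢
  linarith

theorem norm_sub_le_of_variationalInequality_add_smul
    (hmono : ∀ x ∈ X, ∀ y ∈ X, 0 ≤ ⟪F x - F y, x - y⟫)
    (hg : ∀ x ∈ X, ∀ y ∈ X, μ * ‖x - y‖ ^ 2 ≤ ⟪g x - g y, x - y⟫)
    (hμ : 0 < μ) (ha : 0 < a) (hx : x ∈ X) (hy : y ∈ X)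
    (hxsol : ∀ z ∈ X, 0 ≤ ⟪F x + a • g x, z - x⟫)
    (hysol : ∀ z ∈ X, 0 ≤ ⟪F y + b • g y, z - y⟫) :
    ‖x - y‖ ≤ ‖g y‖ / μ * |1 - b / a| := by
  have hsq : a * μ * ‖x - y‖ ^ 2 ≤ |b - a| * ‖g y‖ * ‖x - y‖ :=
    calc a * μ * ‖x - y‖ ^ 2 ≤ a * ⟪g x - g y, x - y⟫ := by
          rw [mul_assoc]; exact mul_le_mul_of_nonneg_left (hg x hx y hy) ha.le
      _ ≤ (b - a) * ⟪g y, x - y⟫ :=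
          inner_le_of_variationalInequality_add_smul hmono hx hy hxsol hysol
      _ ≤ |b - a| * (‖g y‖ * ‖x - y‖) := by
          refine (le_abs_self _).trans ?_
          rw [abs_mul]
          exact mul_le_mul_of_nonneg_left (abs_real_inner_le_norm _ _) (abs_nonneg _)
      _ = |b - a| * ‖g y‖ * ‖x - y‖ := by ring
  have hlin : a * μ * ‖x - y‖ ≤ |b - a| * ‖g y‖ := by
    rcases (norm_nonneg (x - y)).eq_or_lt with h0 | hpos
    · rw [← h0, mul_zero]; positivity
    · nlinarith
  have habs : |1 - b / a| = |b - a| / a := by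
    rw [one_sub_div ha.ne', abs_div, abs_of_pos ha, abs_sub_comm]
  rw [habs, div_mul_div_comm, le_div_iff₀ (by positivity)]
  linarith

end VariationalInequality

theorem tikhonov_trajectory_successive_bound_general {n : ℕ} (X : Set (EuclideanSpace ℝ (Fin n)))
    (f : EuclideanSpace ℝ (Fin n) → ℝ) (hf : ContDiff ℝ 1 f)
    (μf : ℝ) (hμf : 0 < μf)
    (hstrong : ∀ x ∈ X, ∀ y ∈ X,
      f y + ⟪gradient f y, x - y⟫ + μf / 2 * ‖x - y‖ ^ 2 ≤ f x)
    (F : EuclideanSpace ℝ (Fin n) → EuclideanSpace ℝ (Fin n))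
    (hmono : ∀ x ∈ X, ∀ y ∈ X, 0 ≤ ⟪F x - F y, x - y⟫)
    (hSOL : (VISol X F).Nonempty)
    (η : ℕ → ℝ) (hηpos : ∀ k, 0 < η k)
    (xeta : ℕ → EuclideanSpace ℝ (Fin n))
    (hxeta : ∀ k, xeta k ∈ VISol X (fun z => F z + η k • gradient f z)) :
    ∃ Cf : ℝ, 0 < Cf ∧ ∀ k : ℕ, 1 ≤ k →
      ‖xeta k - xeta (k - 1)‖ ≤ Cf / μf * |1 - η (k - 1) / η k| := by
  have hg := strongMonotone_of_strongConvex hstrong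
  obtain ⟨c, hcX, hcsol⟩ := hSOL
  have hball : ∀ k, xeta k ∈ Metric.closedBall c (‖gradient f c‖ / μf) := by
    intro k
    have := norm_sub_le_of_variationalInequality_add_smul (b := 0) hmono hg hμf (hηpos k)
      (hxeta k).1 hcX (hxeta k).2 (by simpa using hcsol)
    simpa [dist_eq_norm] using this
  obtain ⟨M, hM⟩ := (isCompact_closedBall c _).exists_bound_of_continuousOn
    hf.continuous_gradient.continuousOn
  refine ⟨max M 1, by positivity, fun k _ => ?_⟩
  calc ‖xeta k - xeta (k - 1)‖
      ≤ ‖gradient f (xeta (k - 1))‖ / μf * |1 - η (k - 1) / η k| :=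
        norm_sub_le_of_variationalInequality_add_smul hmono hg hμf (hηpos k)
          (hxeta k).1 (hxeta (k - 1)).1 (hxeta k).2 (hxeta (k - 1)).2
    _ ≤ max M 1 / μf * |1 - η (k - 1) / η k| := by
        gcongr
        exact (hM _ (hball (k - 1))).trans (le_max_left M 1)

/-- Along the Tikhonov trajectory (solutions `x*_{η_k}` of `VI(X, F + η_k ∇f)`
with `η_k ↓ 0`), there is a constant `C̄_f > 0` with
`‖x*_{η_k} − x*_{η_{k−1}}‖ ≤ (C̄_f/μ_f)·|1 − η_{k−1}/η_k|` for all `k ≥ 1`. -/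
theorem tikhonov_trajectory_successive_bound {n : ℕ} (X : Set (EuclideanSpace ℝ (Fin n)))
    (hXne : X.Nonempty) (hXcl : IsClosed X) (hXcv : Convex ℝ X)
    (f : EuclideanSpace ℝ (Fin n) → ℝ) (hf : ContDiff ℝ 1 f)
    (μf : ℝ) (hμf : 0 < μf)
    (hstrong : ∀ x ∈ X, ∀ y ∈ X,
      f y + ⟪gradient f y, x - y⟫ + μf / 2 * ‖x - y‖ ^ 2 ≤ f x)
    (F : EuclideanSpace ℝ (Fin n) → EuclideanSpace ℝ (Fin n)) (hFc : Continuous F)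
    (hmono : ∀ x ∈ X, ∀ y ∈ X, 0 ≤ ⟪F x - F y, x - y⟫)
    (hSOL : (VISol X F).Nonempty)
    (η : ℕ → ℝ) (hηpos : ∀ k, 0 < η k) (hηmono : ∀ k, η (k + 1) ≤ η k)
    (hηlim : Tendsto η atTop (nhds 0))
    (xeta : ℕ → EuclideanSpace ℝ (Fin n))
    (hxeta : ∀ k, xeta k ∈ VISol X (fun z => F z + η k • gradient f z)) :
    ∃ Cf : ℝ, 0 < Cf ∧ ∀ k : ℕ, 1 ≤ k →
      ‖xeta k - xeta (k - 1)‖ ≤ Cf / μf * |1 - η (k - 1) / η k| :=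
  tikhonov_trajectory_successive_bound_general X f hf μf hμf hstrong F hmono hSOL η hηpos xeta hxeta
end
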